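/- arXiv:1903.06579 — 2 statements merged into one kernel-verified Lean document; each statement's English description precedes it below -/
import Mathlib

section
/- Let G=(V,E) be a connected simple graph not isomorphic to a star, let k be an integer with 1 ≤ k < |V|−1, and let G'=(V',E') = β(G,k). Then G has an independent set of size at least k if and only if there exists S ⊊ V' of size at least |L| + |M| + k such that G'[S] is a proportionally dense subgraph. -/
/-!
If `I` is independent of size `k`, then `S = L ∪ M ∪ I` is a PDS. Only the edge vertices `uv`
need care: one endpoint lies outside `I`, so `uv` has at most `|V| - k - 1` neighbours outside `S`,
while inside `S` it sees all of `L` and at least `k - 1` vertices of `I`; `|L|` is chosen exactly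
so that these numbers balance the PDS inequality.

Conversely, let `S` be a PDS with `|S| ≥ |L| + |M| + k`, so `|V' ∖ S| ≤ |V| - k`. If an edge
vertex were missing from `S`, then `S` would still meet `L` (as `|L| ≥ |V| - k`), and the PDS
inequality would fail at an `L`-vertex of `S`; hence `M ⊆ S`. If `u, v ∈ S ∩ N`
were adjacent, the vertex `uv ∈ S` would be adjacent to every vertex outside `S`; the PDS
inequality then makes it adjacent to every other vertex of `S`, yet it is not adjacent to `u`.
So `S ∩ N` is independent, and it has at least `k` vertices by counting.
-/

open SimpleGraph

/-- Number of neighbors of `v` inside `T`. -/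
noncomputable def degIn {W : Type*} (G : SimpleGraph W) (T : Set W) (v : W) : ℕ :=
  (T ∩ G.neighborSet v).ncard

/-- `G[S]` is a proportionally dense subgraph. -/
def IsPDS {W : Type*} (G : SimpleGraph W) (S : Set W) : Prop :=
  S ⊂ Set.univ ∧ 2 ≤ S.ncard ∧
    ∀ u ∈ S, degIn G Sᶜ u * (S.ncard - 1) ≤ degIn G S u * Sᶜ.ncard

/-- A star is a complete bipartite graph `K_{1,ℓ}`, `ℓ ≥ 1`. -/
def IsStar {V : Type*} (G : SimpleGraph V) : Prop :=
  ∃ ℓ : ℕ, 1 ≤ ℓ ∧ Nonempty (G ≃g completeBipartiteGraph Unit (Fin ℓ))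

/-- The number `|L| = |M| ⬝ (|V| - k - 1) - k + 1` of extra vertices in `β(G,k)`. -/
noncomputable def lsize {V : Type*} [Fintype V] (G : SimpleGraph V) (k : ℕ) : ℕ :=
  G.edgeSet.ncard * (Fintype.card V - k - 1) - k + 1

/-- Vertex type of the bipartite graph `β(G,k)`: `L` (the `Fin` part), `M` (edge
vertices), and `N = V`. -/
abbrev BetaVert (V : Type*) [Fintype V] (G : SimpleGraph V) (k : ℕ) : Type _ :=
  (Fin (lsize G k) ⊕ ↥G.edgeSet) ⊕ V

/-- The bipartite graph `β(G,k)`: every vertex of `M` is adjacent to every vertex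
of `L`, and a vertex `e ∈ M` is adjacent to `u ∈ N` iff `u` is not an endpoint
of the edge `e` of `G`; there are no other edges. -/
def betaGraph {V : Type*} [Fintype V] (G : SimpleGraph V) (k : ℕ) :
    SimpleGraph (BetaVert V G k) where
  Adj x y :=
    match x, y with
    | Sum.inl (Sum.inl _), Sum.inl (Sum.inr _) => True
    | Sum.inl (Sum.inr _), Sum.inl (Sum.inl _) => True
    | Sum.inl (Sum.inr e), Sum.inr u => u ∉ (e : Sym2 V)
    | Sum.inr u, Sum.inl (Sum.inr e) => u ∉ (e : Sym2 V)
    | _, _ => False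
  symm := by
    exact ⟨by rintro ((a | e) | u) ((b | f) | v) h <;> simp_all⟩
  loopless := by
    exact ⟨by rintro ((a | e) | u) h <;> simp_all⟩

/-- The set `L ∪ M` in `β(G,k)`. -/
def betaLM {V : Type*} [Fintype V] (G : SimpleGraph V) (k : ℕ) : Set (BetaVert V G k) :=
  Set.range Sum.inl

/-- The set `M` of edge-vertices in `β(G,k)`. -/
def betaM {V : Type*} [Fintype V] (G : SimpleGraph V) (k : ℕ) : Set (BetaVert V G k) :=
  Set.range (fun e : ↥G.edgeSet => Sum.inl (Sum.inr e))

open Set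

section PDS

variable {W : Type*} [Finite W] {H : SimpleGraph W} {S : Set W} {u : W}

lemma degIn_compl_eq_zero_of_neighborSet_subset (h : H.neighborSet u ⊆ S) :
    degIn H Sᶜ u = 0 := by
  rw [degIn, ncard_eq_zero, ← disjoint_iff_inter_eq_empty]
  exact disjoint_compl_left.mono_right h

lemma IsPDS.ncard_sub_one_le_degIn_mul (hS : IsPDS H S) (hu : u ∈ S) {v : W} (hv : v ∉ S)
    (huv : H.Adj u v) : S.ncard - 1 ≤ degIn H S u * Sᶜ.ncard :=
  calc S.ncard - 1 ≤ degIn H Sᶜ u * (S.ncard - 1) :=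
        Nat.le_mul_of_pos_left _ ((ncard_pos (toFinite _)).2 ⟨v, hv, huv⟩)
    _ ≤ degIn H S u * Sᶜ.ncard := hS.2.2 u hu

lemma IsPDS.diff_singleton_subset_neighborSet (hS : IsPDS H S) (hu : u ∈ S)
    (hout : Sᶜ ⊆ H.neighborSet u) : S \ {u} ⊆ H.neighborSet u := by
  obtain ⟨hSu, -, hineq⟩ := hS
  have hSc : 0 < Sᶜ.ncard := (ncard_pos (toFinite _)).2 (nonempty_compl.2 hSu.ne)
  have hdeg : S.ncard - 1 ≤ degIn H S u := by
    have h := hineq u hu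
    rw [degIn, inter_eq_left.2 hout, mul_comm] at h
    exact Nat.le_of_mul_le_mul_right h hSc
  have hsub : S ∩ H.neighborSet u ⊆ S \ {u} := fun v ⟨hv, huv⟩ => ⟨hv, huv.ne.symm⟩
  rw [← eq_of_subset_of_ncard_le hsub (by rwa [ncard_sdiff_singleton_of_mem hu])]
  exact inter_subset_right

end PDS

lemma exists_eq_mk_notMem_of_pairwise {V : Type*} {G : SimpleGraph V} {I : Set V}
    (hI : I.Pairwise fun a b => ¬ G.Adj a b) (e : G.edgeSet) :
    ∃ x y, (e : Sym2 V) = s(x, y) ∧ y ∉ I := by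
  obtain ⟨e, he⟩ := e
  induction e using Sym2.ind with
  | h x y =>
    by_cases hy : y ∈ I
    · exact ⟨y, x, Sym2.eq_swap, fun hx => hI hx hy (G.ne_of_adj he) he⟩
    · exact ⟨x, y, rfl, hy⟩

section Beta

variable {V : Type*} [Fintype V] {G : SimpleGraph V} {k : ℕ}

lemma card_betaVert :
    Nat.card (BetaVert V G k) = lsize G k + G.edgeSet.ncard + Fintype.card V := by
  simp [Nat.card_sum, Nat.card_eq_fintype_card, Nat.card_coe_set_eq]

lemma card_sub_one_le_ncard_edgeSet_mul (hconn : G.Connected) (hk : k < Fintype.card V - 1) :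
    Fintype.card V - 1 ≤ G.edgeSet.ncard * (Fintype.card V - k - 1) := by
  have hm := hconn.card_vert_le_card_edgeSet_add_one
  rw [Nat.card_eq_fintype_card, Nat.card_coe_set_eq] at hm
  calc Fintype.card V - 1 ≤ G.edgeSet.ncard := by omega
    _ ≤ G.edgeSet.ncard * (Fintype.card V - k - 1) := Nat.le_mul_of_pos_right _ (by omega)

lemma lsize_add (hconn : G.Connected) (hk : k < Fintype.card V - 1) :
    lsize G k + k = G.edgeSet.ncard * (Fintype.card V - k - 1) + 1 := by
  have := card_sub_one_le_ncard_edgeSet_mul hconn hk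
  unfold lsize
  omega

lemma card_sub_le_lsize (hconn : G.Connected) (hk : k < Fintype.card V - 1) :
    Fintype.card V - k ≤ lsize G k := by
  have := card_sub_one_le_ncard_edgeSet_mul hconn hk
  unfold lsize
  omega

lemma lsize_add_ncard_edgeSet_add (hconn : G.Connected) (hk : k < Fintype.card V - 1) :
    lsize G k + G.edgeSet.ncard + k = G.edgeSet.ncard * (Fintype.card V - k) + 1 := by
  have h := lsize_add hconn hk
  obtain ⟨t, ht⟩ : ∃ t, Fintype.card V - k = t + 1 := ⟨Fintype.card V - k - 1, by omega⟩
  rw [ht, Nat.add_sub_cancel] at h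
  rw [ht, mul_add_one]
  omega

/-- The set `L ∪ M ∪ I` of `β(G,k)`, written as the complement of `N ∖ I`. -/
def betaLMI (G : SimpleGraph V) (k : ℕ) (I : Set V) : Set (BetaVert V G k) :=
  (Sum.inr '' Iᶜ)ᶜ

section betaLMI

variable {I : Set V}

@[simp]
lemma inl_mem_betaLMI (x : Fin (lsize G k) ⊕ G.edgeSet) : Sum.inl x ∈ betaLMI G k I := by
  simp [betaLMI]

@[simp]
lemma inr_mem_betaLMI {u : V} : Sum.inr u ∈ betaLMI G k I ↔ u ∈ I := by
  simp [betaLMI]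

lemma ncard_compl_betaLMI : (betaLMI G k I)ᶜ.ncard = Fintype.card V - I.ncard := by
  rw [betaLMI, compl_compl, ncard_image_of_injective _ Sum.inr_injective, ncard_compl,
    Nat.card_eq_fintype_card]

lemma ncard_betaLMI :
    (betaLMI G k I).ncard = lsize G k + G.edgeSet.ncard + I.ncard := by
  have h := ncard_add_ncard_compl (betaLMI G k I)
  rw [ncard_compl_betaLMI, card_betaVert] at h
  have := Nat.card_eq_fintype_card (α := V) ▸ ncard_le_card I
  omega

lemma degIn_compl_betaLMI_inl_inr_lt {x y : V} {e : G.edgeSet} (hxy : (e : Sym2 V) = s(x, y))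
    (hy : y ∉ I) :
    degIn (betaGraph G k) (betaLMI G k I)ᶜ (Sum.inl (Sum.inr e)) < (betaLMI G k I)ᶜ.ncard := by
  have hyS : (Sum.inr y : BetaVert V G k) ∈ (betaLMI G k I)ᶜ := by simpa using hy
  exact ncard_lt_ncard <| inter_ssubset_left_iff.2 fun h => by
    simpa [betaGraph, hxy] using h hyS

lemma lsize_add_le_degIn_betaLMI_inl_inr {x y : V} {e : G.edgeSet}
    (hxy : (e : Sym2 V) = s(x, y)) (hy : y ∉ I) :
    lsize G k + (I.ncard - 1) ≤ degIn (betaGraph G k) (betaLMI G k I) (Sum.inl (Sum.inr e)) := by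
  set L : Set (BetaVert V G k) := range fun a => Sum.inl (Sum.inl a)
  have hsub : L ∪ Sum.inr '' (I \ {x}) ⊆
      betaLMI G k I ∩ (betaGraph G k).neighborSet (Sum.inl (Sum.inr e)) := by
    rintro _ (⟨a, rfl⟩ | ⟨v, ⟨hvI, hvx⟩, rfl⟩)
    · simp [betaGraph]
    · refine ⟨by simpa using hvI, ?_⟩
      simp only [mem_neighborSet, betaGraph, hxy, Sym2.mem_iff, not_or]
      exact ⟨hvx, fun hvy => hy (hvy ▸ hvI)⟩
  have hdisj : Disjoint L (Sum.inr '' (I \ {x})) := by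
    rw [Set.disjoint_left]
    rintro _ ⟨a, rfl⟩ ⟨v, -, h⟩
    simp at h
  calc lsize G k + (I.ncard - 1) ≤ lsize G k + (I \ {x}).ncard :=
        Nat.add_le_add_left (pred_ncard_le_ncard_sdiff_singleton I x) _
    _ = (L ∪ Sum.inr '' (I \ {x})).ncard := by
        rw [ncard_union_eq hdisj, ncard_range_of_injective (by intro a b; simp),
          ncard_image_of_injective _ Sum.inr_injective, Nat.card_eq_fintype_card,
          Fintype.card_fin]
    _ ≤ _ := ncard_le_ncard hsub

lemma degIn_compl_betaLMI_eq_zero {u : BetaVert V G k}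
    (h : ∀ v, (betaGraph G k).Adj u v → ∃ e, v = Sum.inl (Sum.inr e)) :
    degIn (betaGraph G k) (betaLMI G k I)ᶜ u = 0 :=
  degIn_compl_eq_zero_of_neighborSet_subset fun v huv => by
    obtain ⟨e, rfl⟩ := h v huv
    exact inl_mem_betaLMI _

end betaLMI

lemma isPDS_betaLMI (hconn : G.Connected) (hk : k < Fintype.card V - 1) {I : Set V}
    (hI : I.Pairwise fun a b => ¬ G.Adj a b) (hIk : I.ncard = k) :
    IsPDS (betaGraph G k) (betaLMI G k I) := by
  have hS : (betaLMI G k I).ncard = lsize G k + G.edgeSet.ncard + k := hIk ▸ ncard_betaLMI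
  have hSc : (betaLMI G k I)ᶜ.ncard = Fintype.card V - k := hIk ▸ ncard_compl_betaLMI
  have hL := card_sub_le_lsize hconn hk
  refine ⟨ssubset_univ_iff.2 fun h => ?_, by omega, ?_⟩
  · rw [h, compl_univ, ncard_empty] at hSc
    omega
  rintro ((a | e) | u) -
  case inl.inr =>
    obtain ⟨x, y, hxy, hy⟩ := exists_eq_mk_notMem_of_pairwise hI e
    have hout := degIn_compl_betaLMI_inl_inr_lt (k := k) hxy hy
    have hin := lsize_add_le_degIn_betaLMI_inl_inr (k := k) hxy hy
    have hsum := lsize_add_ncard_edgeSet_add hconn hk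
    have hlk := lsize_add hconn hk
    obtain ⟨t, ht⟩ : ∃ t, Fintype.card V - k = t + 1 := ⟨Fintype.card V - k - 1, by omega⟩
    rw [hSc, ht] at hout
    rw [ht, Nat.add_sub_cancel] at hlk
    rw [hS, hSc, hsum, ht, Nat.add_sub_cancel]
    calc degIn (betaGraph G k) (betaLMI G k I)ᶜ (Sum.inl (Sum.inr e)) *
          (G.edgeSet.ncard * (t + 1))
        ≤ t * (G.edgeSet.ncard * (t + 1)) := by gcongr; omega
      _ = G.edgeSet.ncard * t * (t + 1) := by ring
      _ ≤ degIn (betaGraph G k) (betaLMI G k I) (Sum.inl (Sum.inr e)) * (t + 1) := by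
          gcongr; omega
  all_goals
    rw [degIn_compl_betaLMI_eq_zero, zero_mul]
    · exact Nat.zero_le _
    rintro ((b | f) | v) h <;> simp_all [betaGraph]

section LargePDS

variable {S : Set (BetaVert V G k)}

lemma ncard_compl_add_le_of_le_ncard (hcard : lsize G k + G.edgeSet.ncard + k ≤ S.ncard) :
    Sᶜ.ncard + k ≤ Fintype.card V := by
  have h := ncard_add_ncard_compl S
  rw [card_betaVert] at h
  omega

lemma inl_inr_mem_of_isPDS (hconn : G.Connected) (hk : k < Fintype.card V - 1)
    (hS : IsPDS (betaGraph G k) S) (hcard : lsize G k + G.edgeSet.ncard + k ≤ S.ncard)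
    (f : G.edgeSet) : Sum.inl (Sum.inr f) ∈ S := by
  by_contra hf
  have hSc := ncard_compl_add_le_of_le_ncard hcard
  obtain ⟨a, ha⟩ : ∃ a, Sum.inl (Sum.inl a) ∈ S := by
    by_contra! hL
    have hsub : insert (Sum.inl (Sum.inr f)) (range fun a => Sum.inl (Sum.inl a)) ⊆ Sᶜ := by
      rintro _ (rfl | ⟨a, rfl⟩)
      exacts [hf, hL a]
    have := ncard_le_ncard hsub
    rw [ncard_insert_of_notMem (by simp), ncard_range_of_injective (by intro a b; simp),
      Nat.card_eq_fintype_card, Fintype.card_fin] at this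
    have := card_sub_le_lsize hconn hk
    omega
  have hdeg : degIn (betaGraph G k) S (Sum.inl (Sum.inl a)) + 1 ≤ G.edgeSet.ncard := by
    have hN : (betaGraph G k).neighborSet (Sum.inl (Sum.inl a)) = betaM G k := by
      ext ((b | g) | v) <;> simp [betaM, betaGraph]
    have hlt : S ∩ (betaGraph G k).neighborSet (Sum.inl (Sum.inl a)) ⊂
        (betaGraph G k).neighborSet (Sum.inl (Sum.inl a)) :=
      inter_ssubset_right_iff.2 fun h => hf (h (by simp [betaGraph]))
    have := ncard_lt_ncard hlt
    rwa [← degIn, hN, betaM, ncard_range_of_injective (by intro a b; simp),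
      Nat.card_coe_set_eq] at this
  have hpds := hS.ncard_sub_one_le_degIn_mul ha hf (by simp [betaGraph])
  have hsum := lsize_add_ncard_edgeSet_add hconn hk
  set d := degIn (betaGraph G k) S (Sum.inl (Sum.inl a))
  have : (d + 1) * (Fintype.card V - k) ≤ d * (Fintype.card V - k) :=
    calc (d + 1) * (Fintype.card V - k) ≤ G.edgeSet.ncard * (Fintype.card V - k) := by gcongr
      _ ≤ S.ncard - 1 := by omega
      _ ≤ d * Sᶜ.ncard := hpds
      _ ≤ d * (Fintype.card V - k) := by gcongr; omega
  rw [add_one_mul] at this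
  omega

lemma pairwise_preimage_inr_of_isPDS (hconn : G.Connected) (hk : k < Fintype.card V - 1)
    (hS : IsPDS (betaGraph G k) S) (hcard : lsize G k + G.edgeSet.ncard + k ≤ S.ncard) :
    (Sum.inr ⁻¹' S).Pairwise fun a b => ¬ G.Adj a b := by
  intro a ha b hb _ hab
  have hM := inl_inr_mem_of_isPDS hconn hk hS hcard
  have hout : Sᶜ ⊆ (betaGraph G k).neighborSet (Sum.inl (Sum.inr ⟨s(a, b), hab⟩)) := by
    rintro ((c | f) | v) hv
    · simp [betaGraph]
    · exact absurd (hM f) hv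
    · simp only [mem_neighborSet, betaGraph, Sym2.mem_iff]
      rintro (rfl | rfl)
      exacts [hv ha, hv hb]
  have := hS.diff_singleton_subset_neighborSet (hM _) hout
    (show Sum.inr a ∈ S \ {_} from ⟨ha, by simp⟩)
  simp [betaGraph] at this

lemma le_ncard_preimage_inr_of_le_ncard (hcard : lsize G k + G.edgeSet.ncard + k ≤ S.ncard) :
    k ≤ (Sum.inr ⁻¹' S).ncard := by
  have hSc := ncard_compl_add_le_of_le_ncard hcard
  have hinr : (Sum.inr ⁻¹' Sᶜ).ncard ≤ Sᶜ.ncard := by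
    rw [← ncard_image_of_injective _ Sum.inr_injective]
    exact ncard_le_ncard (image_preimage_subset _ _)
  have h := ncard_add_ncard_compl (Sum.inr ⁻¹' S)
  rw [← preimage_compl, Nat.card_eq_fintype_card] at h
  omega

end LargePDS

end Beta

theorem beta_reduction_correct_general {V : Type*} [Fintype V] (G : SimpleGraph V)
    (hconn : G.Connected)
    (k : ℕ) (hk2 : k < Fintype.card V - 1) :
    (∃ I : Set V, I.Pairwise (fun a b => ¬ G.Adj a b) ∧ k ≤ I.ncard)
      ↔ (∃ S : Set (BetaVert V G k),
          IsPDS (betaGraph G k) S ∧ lsize G k + G.edgeSet.ncard + k ≤ S.ncard) := by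
  constructor
  · rintro ⟨I, hI, hIk⟩
    obtain ⟨J, hJI, hJk⟩ := exists_subset_card_eq hIk
    exact ⟨betaLMI G k J, isPDS_betaLMI hconn hk2 (hI.mono hJI) hJk,
      (hJk ▸ ncard_betaLMI).ge⟩
  · rintro ⟨S, hS, hcard⟩
    exact ⟨Sum.inr ⁻¹' S, pairwise_preimage_inr_of_isPDS hconn hk2 hS hcard,
      le_ncard_preimage_inr_of_le_ncard hcard⟩

/-- Theorem 2 of the paper (correctness of the bipartite reduction): `G` has an
independent set of size at least `k` iff `β(G,k)` has a PDS of size at least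
`|L| + |M| + k`. -/
theorem beta_reduction_correct {V : Type*} [Fintype V] (G : SimpleGraph V)
    (hconn : G.Connected) (hstar : ¬ IsStar G)
    (k : ℕ) (hk1 : 1 ≤ k) (hk2 : k < Fintype.card V - 1) :
    (∃ I : Set V, I.Pairwise (fun a b => ¬ G.Adj a b) ∧ k ≤ I.ncard)
      ↔ (∃ S : Set (BetaVert V G k),
          IsPDS (betaGraph G k) S ∧ lsize G k + G.edgeSet.ncard + k ≤ S.ncard) :=
  beta_reduction_correct_general G hconn k hk2
end

section
/- Let G=(V,E) be a connected simple graph not isomorphic to a star, let k be an integer with 1 ≤ k < |V|−1, and let G'=(V',E') = β(G,k). If S ⊊ V' is such that L ∪ M ⊊ S and G'[S] is a proportionally dense subgraph, then |S| ≥ |L| + |M| + k. -/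
open SimpleGraph

/-! Write `S = L ∪ M ∪ T` with `T ⊆ N` nonempty, pick `v ∈ T` and an edge `vw` of `G`, and test
the PDS inequality at the vertex `vw ∈ M`. Inside `S` its neighbours are `L` and at most `|T| - 1`
vertices of `T`; outside `S` it sees all of `N ∖ T` except possibly `w`. The inequality then forces
`(|V| - |T| - 1)·|M| < |L| + |T|`. As `|L| = |M|(|V| - k - 1) - k + 1` and `|M| ≥ |V| - 1 > k` for
connected `G`, this fails as soon as `|T| < k`. -/

theorem Set.ncard_eq_ncard_preimage_inl_add_ncard_preimage_inr {α β : Type*}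
    {s : Set (α ⊕ β)} (hs : s.Finite) :
    s.ncard = (Sum.inl ⁻¹' s).ncard + (Sum.inr ⁻¹' s).ncard := by
  conv_lhs => rw [← Set.image_preimage_inl_union_image_preimage_inr s]
  rw [Set.ncard_union_eq Set.disjoint_image_inl_image_inr
      ((hs.preimage Sum.inl_injective.injOn).image _)
      ((hs.preimage Sum.inr_injective.injOn).image _),
    Set.ncard_image_of_injective _ Sum.inl_injective,
    Set.ncard_image_of_injective _ Sum.inr_injective]

section Beta

variable {V : Type*} [Fintype V] {G : SimpleGraph V} {k : ℕ} {S : Set (BetaVert V G k)}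

theorem betaLM_subset_iff : betaLM G k ⊆ S ↔ Sum.inl ⁻¹' S = Set.univ := by
  simp [betaLM, Set.range_subset_iff, Set.eq_univ_iff_forall]

theorem ncard_of_betaLM_subset (h : betaLM G k ⊆ S) :
    S.ncard = lsize G k + G.edgeSet.ncard + (Sum.inr ⁻¹' S).ncard := by
  rw [Set.ncard_eq_ncard_preimage_inl_add_ncard_preimage_inr S.toFinite,
    betaLM_subset_iff.mp h, Set.ncard_univ, Nat.card_sum, Nat.card_eq_fintype_card,
    Fintype.card_fin, Nat.card_coe_set_eq]

theorem ncard_compl_of_betaLM_subset (h : betaLM G k ⊆ S) :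
    Sᶜ.ncard = Fintype.card V - (Sum.inr ⁻¹' S).ncard := by
  rw [Set.ncard_eq_ncard_preimage_inl_add_ncard_preimage_inr Sᶜ.toFinite, Set.preimage_compl,
    Set.preimage_compl, betaLM_subset_iff.mp h, Set.compl_univ, Set.ncard_empty, zero_add,
    Set.ncard_compl, Nat.card_eq_fintype_card]

theorem degIn_betaGraph_inl_inr (X : Set (BetaVert V G k)) (e : G.edgeSet) :
    degIn (betaGraph G k) X (Sum.inl (Sum.inr e)) =
      (Sum.inl ⁻¹' (Sum.inl ⁻¹' X)).ncard + (Sum.inr ⁻¹' X ∩ {u | u ∉ (e : Sym2 V)}).ncard := by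
  set N := (betaGraph G k).neighborSet (Sum.inl (Sum.inr e))
  have hL : Sum.inl ⁻¹' (Sum.inl ⁻¹' (X ∩ N)) = Sum.inl ⁻¹' (Sum.inl ⁻¹' X) := by
    ext; simp [N, betaGraph]
  have hM : Sum.inr ⁻¹' (Sum.inl ⁻¹' (X ∩ N)) = ∅ := by
    ext; simp [N, betaGraph]
  have hN : Sum.inr ⁻¹' (X ∩ N) = Sum.inr ⁻¹' X ∩ {u | u ∉ (e : Sym2 V)} := by
    ext; simp [N, betaGraph]
  rw [degIn, Set.ncard_eq_ncard_preimage_inl_add_ncard_preimage_inr (Set.toFinite _),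
    Set.ncard_eq_ncard_preimage_inl_add_ncard_preimage_inr (Set.toFinite _), hL, hM, hN,
    Set.ncard_empty, add_zero]

theorem mul_card_edgeSet_lt_of_isPDS (hLM : betaLM G k ⊆ S) (hPDS : IsPDS (betaGraph G k) S)
    {v w : V} (hv : Sum.inr v ∈ S) (hvw : G.Adj v w) :
    (Fintype.card V - (Sum.inr ⁻¹' S).ncard - 1) * G.edgeSet.ncard <
      lsize G k + (Sum.inr ⁻¹' S).ncard := by
  set T := Sum.inr ⁻¹' S with hT
  obtain ⟨e, he⟩ : ∃ e : G.edgeSet, (e : Sym2 V) = s(v, w) := ⟨⟨_, G.mem_edgeSet.mpr hvw⟩, rfl⟩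
  set E : BetaVert V G k := Sum.inl (Sum.inr e)
  have hS : degIn (betaGraph G k) S E + 1 ≤ lsize G k + T.ncard := by
    rw [degIn_betaGraph_inl_inr, betaLM_subset_iff.mp hLM, Set.preimage_univ, Set.ncard_univ,
      Nat.card_eq_fintype_card, Fintype.card_fin, he, ← hT]
    have hvT := Set.ncard_sdiff_singleton_add_one (show v ∈ T from hv)
    have : (T ∩ {u | u ∉ s(v, w)}).ncard ≤ (T \ {v}).ncard :=
      Set.ncard_le_ncard fun u ⟨hu, hue⟩ ↦ ⟨hu, by rintro rfl; simp at hue⟩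
    omega
  have hSc : Fintype.card V - T.ncard ≤ degIn (betaGraph G k) Sᶜ E + 1 := by
    rw [degIn_betaGraph_inl_inr, he]
    simp only [Set.preimage_compl, betaLM_subset_iff.mp hLM,
      Set.compl_univ, Set.preimage_empty, Set.ncard_empty, zero_add, ← hT]
    have hTc : Tᶜ.ncard = Fintype.card V - T.ncard := by
      rw [Set.ncard_compl, Nat.card_eq_fintype_card]
    have hw := Set.pred_ncard_le_ncard_sdiff_singleton Tᶜ w
    have : (Tᶜ \ {w}).ncard ≤ (Tᶜ ∩ {u | u ∉ s(v, w)}).ncard := by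
      refine Set.ncard_le_ncard fun u ⟨hu, huw⟩ ↦ ⟨hu, ?_⟩
      rw [Set.mem_ofPred_eq, Sym2.mem_iff]
      rintro (rfl | rfl)
      exacts [hu hv, huw rfl]
    omega
  have h := hPDS.2.2 E (hLM ⟨Sum.inr _, rfl⟩)
  rw [ncard_of_betaLM_subset hLM, ncard_compl_of_betaLM_subset hLM] at h
  set a := Fintype.card V - T.ncard - 1
  set p := lsize G k + T.ncard - 1
  have hl : 1 ≤ lsize G k := Nat.le_add_left 1 _
  have key : a * (p + G.edgeSet.ncard) ≤ p * (a + 1) := calc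
    _ ≤ degIn (betaGraph G k) Sᶜ E * (lsize G k + G.edgeSet.ncard + T.ncard - 1) :=
      Nat.mul_le_mul (by omega) (by omega)
    _ ≤ degIn (betaGraph G k) S E * (Fintype.card V - T.ncard) := h
    _ ≤ p * (a + 1) := Nat.mul_le_mul (by omega) (by omega)
  rw [mul_add, mul_add, mul_one, mul_comm p] at key
  omega

end Beta

theorem le_of_mul_lt_lsize_add {V : Type*} [Fintype V] {G : SimpleGraph V} (hconn : G.Connected)
    {k t : ℕ} (hk : k < Fintype.card V - 1)
    (h : (Fintype.card V - t - 1) * G.edgeSet.ncard < lsize G k + t) : k ≤ t := by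
  have hn : Fintype.card V ≤ G.edgeSet.ncard + 1 := by
    simpa [Nat.card_eq_fintype_card, Nat.card_coe_set_eq] using
      hconn.card_vert_le_card_edgeSet_add_one
  by_contra! htk
  rw [lsize, mul_comm] at h
  set n := Fintype.card V
  set m := G.edgeSet.ncard
  have hmono : m * (n - k) ≤ m * (n - t - 1) := Nat.mul_le_mul_left _ (by omega)
  have hsplit : m * (n - k) = m * (n - k - 1) + m := by
    rw [← Nat.mul_succ]; congr 1; omega
  have hpos : m ≤ m * (n - k - 1) := Nat.le_mul_of_pos_right _ (by omega)
  omega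

theorem beta_LM_pds_large_general {V : Type*} [Fintype V] (G : SimpleGraph V)
    (hconn : G.Connected)
    (k : ℕ) (hk2 : k < Fintype.card V - 1)
    (S : Set (BetaVert V G k)) (hsub : betaLM G k ⊂ S)
    (hPDS : IsPDS (betaGraph G k) S) :
    lsize G k + G.edgeSet.ncard + k ≤ S.ncard := by
  obtain ⟨(x | v), hvS, hvLM⟩ := Set.exists_of_ssubset hsub
  · exact absurd ⟨x, rfl⟩ hvLM
  have : Nontrivial V := Fintype.one_lt_card_iff_nontrivial.mp (by omega)
  obtain ⟨w, hvw⟩ := hconn.preconnected.exists_adj_of_nontrivial v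
  rw [ncard_of_betaLM_subset hsub.le]
  exact Nat.add_le_add_left
    (le_of_mul_lt_lsize_add hconn hk2 (mul_card_edgeSet_lt_of_isPDS hsub.le hPDS hvS hvw)) _

/-- Lemma 7 of the paper: if `L ∪ M ⊊ S` and `β(G,k)[S]` is a PDS, then
`|S| ≥ |L| + |M| + k`. -/
theorem beta_LM_pds_large {V : Type*} [Fintype V] (G : SimpleGraph V)
    (hconn : G.Connected) (hstar : ¬ IsStar G)
    (k : ℕ) (hk1 : 1 ≤ k) (hk2 : k < Fintype.card V - 1)
    (S : Set (BetaVert V G k)) (hsub : betaLM G k ⊂ S)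
    (hPDS : IsPDS (betaGraph G k) S) :
    lsize G k + G.edgeSet.ncard + k ≤ S.ncard :=
  beta_LM_pds_large_general G hconn k hk2 S hsub hPDS
end
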